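/- arXiv:1404.0992 — 5 statements merged into one kernel-verified Lean document; each statement's English description precedes it below -/
import Mathlib

section
/- For a sequence s of positive integers with s_1 ≥ 2 and each s_i ≥ 1, the multiple zeta value Ze^s = Σ_{0 < n_r < ... < n_1} ∏ n_i^{-s_i} satisfies 0 ≤ Ze^s ≤ 2. -/
/-! Since `∑_{n > m} n^{-s} ≤ 1/m` for `s ≥ 2`, summing out the largest index shows
`Ze(s₁, s₂, s₃, …) ≤ Ze(s₂ + 1, s₃, …)` on every truncation `n₁ < M`; iterating leaves a single
`∑ n^{-t} ≤ 1 + 1` with `t ≥ 2`. -/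

open Finset

/-- `truncMZV [s₁, …, s_r] M = ∑_{M > n₁ > ⋯ > n_r > 0} ∏ nᵢ^{-sᵢ}`. -/
noncomputable def truncMZV : List ℕ → ℕ → ℝ
  | [], _ => 1
  | s :: l, M => ∑ n ∈ Ico 1 M, ((n : ℝ) ^ s)⁻¹ * truncMZV l n

theorem truncMZV_nonneg : ∀ (l : List ℕ) (M : ℕ), 0 ≤ truncMZV l M
  | [], _ => zero_le_one
  | _ :: l, _ => sum_nonneg fun _ _ => mul_nonneg (by positivity) (truncMZV_nonneg l _)

theorem sum_Ico_inv_pow_le_inv {m s : ℕ} (hm : m ≠ 0) (hs : 2 ≤ s) (M : ℕ) :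
    ∑ n ∈ Ico (m + 1) M, ((n : ℝ) ^ s)⁻¹ ≤ (m : ℝ)⁻¹ :=
  calc ∑ n ∈ Ico (m + 1) M, ((n : ℝ) ^ s)⁻¹
      ≤ ∑ n ∈ Ico (m + 1) M, ((n : ℝ) ^ 2)⁻¹ := sum_le_sum fun n hn => by
        have : (1 : ℝ) ≤ n := by exact_mod_cast (mem_Ico.1 hn).1.trans' (by omega)
        gcongr
    _ ≤ ∑ n ∈ Ioc m (max m M), ((n : ℝ) ^ 2)⁻¹ :=
        sum_le_sum_of_subset_of_nonneg (fun n hn => by simp only [mem_Ico, mem_Ioc] at hn ⊢; omega)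
          fun _ _ _ => by positivity
    _ ≤ (m : ℝ)⁻¹ - ((max m M : ℕ) : ℝ)⁻¹ := sum_Ioc_inv_sq_le_sub hm (le_max_left _ _)
    _ ≤ (m : ℝ)⁻¹ := sub_le_self _ (by positivity)

theorem sum_Ico_one_inv_pow_le_two {s : ℕ} (hs : 2 ≤ s) (M : ℕ) :
    ∑ n ∈ Ico 1 M, ((n : ℝ) ^ s)⁻¹ ≤ 2 := by
  rcases le_or_gt M 1 with hM | hM
  · rw [Ico_eq_empty_of_le hM, sum_empty]
    exact zero_le_two
  · have tail := sum_Ico_inv_pow_le_inv one_ne_zero hs M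
    rw [sum_eq_sum_Ico_succ_bot hM]
    norm_num at tail ⊢
    linarith

theorem truncMZV_cons_cons_le {s : ℕ} (hs : 2 ≤ s) (t : ℕ) (l : List ℕ) (M : ℕ) :
    truncMZV (s :: t :: l) M ≤ truncMZV ((t + 1) :: l) M :=
  calc truncMZV (s :: t :: l) M
      = ∑ m ∈ Ico 1 M,
          (∑ n ∈ Ico (m + 1) M, ((n : ℝ) ^ s)⁻¹) * (((m : ℝ) ^ t)⁻¹ * truncMZV l m) := by
        simp only [truncMZV, mul_sum, sum_mul]
        exact (sum_Ico_Ico_comm' 1 M _).symm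
    _ ≤ ∑ m ∈ Ico 1 M, (m : ℝ)⁻¹ * (((m : ℝ) ^ t)⁻¹ * truncMZV l m) := by
        gcongr with m hm
        · exact mul_nonneg (by positivity) (truncMZV_nonneg l m)
        · exact sum_Ico_inv_pow_le_inv (by have := (mem_Ico.1 hm).1; omega) hs M
    _ = truncMZV ((t + 1) :: l) M := by
        simp only [truncMZV, pow_succ, mul_inv]
        exact sum_congr rfl fun _ _ => by ring

theorem truncMZV_cons_le_two {s : ℕ} (hs : 2 ≤ s) {l : List ℕ} (hl : ∀ t ∈ l, 1 ≤ t) (M : ℕ) :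
    truncMZV (s :: l) M ≤ 2 := by
  induction l generalizing s with
  | nil => simpa [truncMZV] using sum_Ico_one_inv_pow_le_two hs M
  | cons t l ih =>
    have ht := hl t List.mem_cons_self
    exact (truncMZV_cons_cons_le hs t l M).trans
      (ih (by omega) (fun u hu => hl u (List.mem_cons_of_mem _ hu)))

theorem sum_prod_inv_pow_le_truncMZV {r : ℕ} (s : Fin r → ℕ) (M : ℕ) (u : Finset (Fin r → ℕ))
    (hu : ∀ f ∈ u, StrictAnti f ∧ ∀ i, 0 < f i ∧ f i < M) :
    ∑ f ∈ u, ∏ i, ((f i : ℝ) ^ s i)⁻¹ ≤ truncMZV (List.ofFn s) M := by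
  induction r generalizing M with
  | zero => simpa [truncMZV] using card_le_one_of_subsingleton u
  | succ r ih =>
    have head_mem : ∀ f ∈ u, f 0 ∈ Ico 1 M := fun f hf => mem_Ico.2 ((hu f hf).2 0)
    rw [List.ofFn_succ, truncMZV, ← sum_fiberwise_of_maps_to head_mem]
    refine sum_le_sum fun n _ => ?_
    have tail_injOn : Set.InjOn Fin.tail (u.filter fun f => f 0 = n : Set (Fin (r + 1) → ℕ)) :=
      fun f hf g hg h => funext (Fin.cases (by rw [(mem_filter.1 hf).2, (mem_filter.1 hg).2])
        (congrFun h))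
    calc ∑ f ∈ u with f 0 = n, ∏ i, ((f i : ℝ) ^ s i)⁻¹
        = ((n : ℝ) ^ s 0)⁻¹ * ∑ f ∈ u with f 0 = n, ∏ i, ((Fin.tail f i : ℝ) ^ Fin.tail s i)⁻¹ := by
          rw [mul_sum]
          refine sum_congr rfl fun f hf => ?_
          rw [Fin.prod_univ_succ, (mem_filter.1 hf).2]
          rfl
      _ = ((n : ℝ) ^ s 0)⁻¹ *
            ∑ g ∈ {f ∈ u | f 0 = n}.image Fin.tail, ∏ i, ((g i : ℝ) ^ Fin.tail s i)⁻¹ := by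
          rw [sum_image tail_injOn]
      _ ≤ ((n : ℝ) ^ s 0)⁻¹ * truncMZV (List.ofFn fun i => s i.succ) n := by
          gcongr
          refine ih _ n _ fun g hg => ?_
          obtain ⟨f, hf, rfl⟩ := mem_image.1 hg
          obtain ⟨hfu, rfl⟩ := mem_filter.1 hf
          have hanti := (hu f hfu).1
          exact ⟨hanti.comp_strictMono Fin.strictMono_succ,
            fun i => ⟨((hu f hfu).2 _).1, hanti (Fin.succ_pos i)⟩⟩

/-- Convergent multiple zeta values lie between `0` and `2`. -/
theorem mzv_le_two (r : ℕ) (hr : 0 < r) (s : Fin r → ℕ)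
    (h1 : ∀ i, 1 ≤ s i) (h2 : 2 ≤ s ⟨0, hr⟩) :
    0 ≤ ∑' n : {f : Fin r → ℕ // StrictAnti f ∧ ∀ i, 0 < f i},
          ∏ i, ((n.1 i : ℝ) ^ s i)⁻¹ ∧
    ∑' n : {f : Fin r → ℕ // StrictAnti f ∧ ∀ i, 0 < f i},
          ∏ i, ((n.1 i : ℝ) ^ s i)⁻¹ ≤ 2 := by
  refine ⟨tsum_nonneg fun n => prod_nonneg fun i _ => by positivity,
    tsum_le_of_sum_le' zero_le_two fun u => ?_⟩
  obtain _ | r := r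
  · exact absurd hr (lt_irrefl 0)
  set M := u.sup (fun f => f.1 0) + 1
  have hM : ∀ f ∈ u.map (Function.Embedding.subtype _), StrictAnti f ∧ ∀ i, 0 < f i ∧ f i < M := by
    intro f hf
    obtain ⟨f, hfu, rfl⟩ := mem_map.1 hf
    have head_le : f.1 0 ≤ u.sup (fun f => f.1 0) := le_sup (f := fun f => f.1 0) hfu
    exact ⟨f.2.1, fun i =>
      ⟨f.2.2 i, Nat.lt_succ_of_le ((f.2.1.antitone (Fin.zero_le i)).trans head_le)⟩⟩
  calc ∑ f ∈ u, ∏ i, ((f.1 i : ℝ) ^ s i)⁻¹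
      = ∑ f ∈ u.map (Function.Embedding.subtype _), ∏ i, ((f i : ℝ) ^ s i)⁻¹ := by
        rw [sum_map]
        rfl
    _ ≤ truncMZV (List.ofFn s) M := sum_prod_inv_pow_le_truncMZV s M _ hM
    _ ≤ 2 := by
      rw [List.ofFn_succ]
      exact truncMZV_cons_le_two h2 (List.forall_mem_ofFn_iff.2 fun i => h1 _) M
end

section
/- For a sequence s = (s_1,...,s_r) of positive integers with s_1 ≥ 2, the Hurwitz multizeta function He_+^s(z) = Σ_{0 < n_r < ... < n_1} ∏_i (n_i + z)^{-s_i} converges for |z| < 1/2 and equals the power series Σ_{k_1,...,k_r ≥ 0} [∏_i C(s_i+k_i-1, k_i)] Ze^{(s_1+k_1,...,s_r+k_r)} (-z)^{k_1+...+k_r}. -/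
/-!
Expand each factor `(n + z)⁻ˢ = n⁻ˢ (1 + z/n)⁻ˢ` by the binomial series; it converges absolutely
because `‖z‖ < 1/2 < n`. The double series over `(n, k)` is absolutely convergent: summing the
absolute values over `k` gives `∏ (nᵢ - ‖z‖)^(-sᵢ) ≤ 2^(∑ sᵢ) ∏ nᵢ^(-sᵢ)`, and the multiple zeta
series converges since on decreasing tuples `∏ nᵢ^sᵢ ≥ n₁ ∏ nᵢ ≥ (∏ nᵢ)^(1 + 1/r)`, which makes it
dominated by a product of `r` convergent `p`-series. Fubini then exchanges the sums over `n`
and `k`.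
-/

open Finset Function

theorem hasSum_pi_prod_of_summable_norm {R β : Type*} [NormedCommRing R] [CompleteSpace R]
    {r : ℕ} {f : Fin r → β → R} {a : Fin r → R}
    (hf : ∀ i, Summable fun b => ‖f i b‖) (ha : ∀ i, HasSum (f i) (a i)) :
    HasSum (fun k : Fin r → β => ∏ i, f i (k i)) (∏ i, a i) ∧
      Summable fun k : Fin r → β => ‖∏ i, f i (k i)‖ := by
  induction r with
  | zero => exact ⟨by simp, .of_finite⟩
  | succ r ih =>
    obtain ⟨ih_sum, ih_norm⟩ := ih (fun i => hf i.succ) (fun i => ha i.succ)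
    have hcons (p : β × (Fin r → β)) : ∏ i, f i (Fin.consEquiv (fun _ => β) p i) =
        f 0 p.1 * ∏ i : Fin r, f i.succ (p.2 i) := by
      simp [Fin.prod_univ_succ, Fin.consEquiv]
    have hmul := summable_mul_of_summable_norm (hf 0) ih_norm
    refine ⟨(Fin.consEquiv _).hasSum_iff.mp ?_, (Fin.consEquiv _).summable_iff.mp ?_⟩
    · simp only [comp_def, Fin.prod_univ_succ, (ha 0).mul_eq ih_sum hmul.hasSum]
      exact hmul.hasSum
    · simpa only [comp_def, hcons] using (hf 0).mul_norm ih_norm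

section NegBinomial

variable {𝕜 : Type*} [RCLike 𝕜]

def negBinomialTerm (s : ℕ) (w x : 𝕜) (k : ℕ) : 𝕜 :=
  (s + k - 1).choose k * (-x) ^ k * (w ^ (s + k))⁻¹

theorem hasSum_negBinomialTerm (s : ℕ) {w x : 𝕜} (hxw : ‖x‖ < ‖w‖) :
    HasSum (negBinomialTerm s w x) ((w + x) ^ s)⁻¹ := by
  have hw : w ≠ 0 := norm_pos_iff.mp ((norm_nonneg x).trans_lt hxw)
  cases s with
  | zero =>
    refine (hasSum_single 0 fun k hk => ?_).trans_eq (by simp [negBinomialTerm])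
    simp [negBinomialTerm, Nat.choose_eq_zero_of_lt (Nat.sub_one_lt hk)]
  | succ t =>
    have hr : ‖-x / w‖ < 1 := by
      rwa [norm_div, norm_neg, div_lt_one (norm_pos_iff.mpr hw)]
    have hsum :
        (w ^ (t + 1))⁻¹ * (1 / (1 - -x / w) ^ (t + 1)) = ((w + x) ^ (t + 1))⁻¹ := by
      rw [one_sub_div hw, sub_neg_eq_add, div_pow]
      field_simp
    refine hsum ▸ ((hasSum_choose_mul_geometric_of_norm_lt_one t hr).mul_left _).congr_fun
      fun k => ?_
    rw [negBinomialTerm, show t + 1 + k - 1 = k + t by omega, Nat.choose_symm_add, div_pow,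
      pow_add]
    field_simp

theorem hasSum_norm_negBinomialTerm (s : ℕ) {w x : 𝕜} (hxw : ‖x‖ < ‖w‖) :
    HasSum (fun k => ‖negBinomialTerm s w x k‖) ((‖w‖ - ‖x‖) ^ s)⁻¹ := by
  have hnorm (k : ℕ) : ‖negBinomialTerm s w x k‖ = negBinomialTerm s ‖w‖ (-‖x‖) k := by
    simp [negBinomialTerm]
  simpa only [hnorm, sub_eq_add_neg] using
    hasSum_negBinomialTerm s (w := ‖w‖) (x := -‖x‖) (by simpa using hxw)

theorem prod_negBinomialTerm {ι : Type*} [Fintype ι] (s : ι → ℕ) (w : ι → 𝕜) (x : 𝕜)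
    (k : ι → ℕ) :
    ∏ i, negBinomialTerm (s i) (w i) x (k i) =
      (∏ i, ((s i + k i - 1).choose (k i) : 𝕜)) * (∏ i, (w i ^ (s i + k i))⁻¹) *
        (-x) ^ ∑ i, k i := by
  simp only [negBinomialTerm, prod_mul_distrib, prod_pow_eq_pow_sum]
  ring

theorem norm_lt_norm_natCast {x : 𝕜} (hx : ‖x‖ < 1) {m : ℕ} (hm : 0 < m) :
    ‖x‖ < ‖(m : 𝕜)‖ := by
  rw [RCLike.norm_natCast]
  exact hx.trans_le (by exact_mod_cast hm)

variable {r : ℕ} (s : Fin r → ℕ) {w : Fin r → 𝕜} {x : 𝕜}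

theorem hasSum_prod_negBinomialTerm (hxw : ∀ i, ‖x‖ < ‖w i‖) :
    HasSum (fun k : Fin r → ℕ => ∏ i, negBinomialTerm (s i) (w i) x (k i))
      (∏ i, ((w i + x) ^ s i)⁻¹) :=
  (hasSum_pi_prod_of_summable_norm
    (fun i => (hasSum_norm_negBinomialTerm (s i) (hxw i)).summable)
    fun i => hasSum_negBinomialTerm (s i) (hxw i)).1

theorem hasSum_norm_prod_negBinomialTerm (hxw : ∀ i, ‖x‖ < ‖w i‖) :
    HasSum (fun k : Fin r → ℕ => ‖∏ i, negBinomialTerm (s i) (w i) x (k i)‖)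
      (∏ i, ((‖w i‖ - ‖x‖) ^ s i)⁻¹) := by
  simp only [norm_prod]
  exact (hasSum_pi_prod_of_summable_norm
    (fun i => (hasSum_norm_negBinomialTerm (s i) (hxw i)).summable.norm)
    fun i => hasSum_norm_negBinomialTerm (s i) (hxw i)).1

end NegBinomial

theorem prod_rpow_le_prod_pow {ι : Type*} [Fintype ι] {x : ι → ℝ} {s : ι → ℕ} (i₀ : ι)
    (hx : ∀ i, 1 ≤ x i) (hmax : ∀ i, x i ≤ x i₀) (hs : ∀ i, 1 ≤ s i) (hs₀ : 2 ≤ s i₀) :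
    ∏ i, x i ^ (1 + 1 / Fintype.card ι : ℝ) ≤ ∏ i, x i ^ s i := by
  classical
  have : Nonempty ι := ⟨i₀⟩
  set c := Fintype.card ι
  set P := ∏ i, x i
  have hx₀ : ∀ i, 0 ≤ x i := fun i => zero_le_one.trans (hx i)
  have hP : 0 ≤ P := prod_nonneg fun i _ => hx₀ i
  have hroot : P ^ (1 / c : ℝ) ≤ x i₀ := calc
    P ^ (1 / c : ℝ) ≤ (x i₀ ^ c) ^ (1 / c : ℝ) :=
      Real.rpow_le_rpow hP ((prod_le_prod (fun i _ => hx₀ i) fun i _ => hmax i).trans_eq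
        (by rw [prod_const, card_univ])) (by positivity)
    _ = x i₀ := by
      rw [one_div, Real.pow_rpow_inv_natCast (hx₀ i₀) Fintype.card_ne_zero]
  have hlead : x i₀ * P ≤ ∏ i, x i ^ s i := by
    rw [show P = _ from (mul_prod_erase univ x (mem_univ i₀)).symm,
      ← mul_prod_erase univ (fun i => x i ^ s i) (mem_univ i₀), ← mul_assoc, ← sq]
    exact mul_le_mul (pow_le_pow_right₀ (hx i₀) hs₀)
      (prod_le_prod (fun i _ => hx₀ i) fun i _ =>
        le_self_pow₀ (hx i) (Nat.one_le_iff_ne_zero.mp (hs i)))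
      (prod_nonneg fun i _ => hx₀ i) (pow_nonneg (hx₀ i₀) _)
  calc ∏ i, x i ^ (1 + 1 / c : ℝ) = P * P ^ (1 / c : ℝ) := by
        rw [Real.finsetProd_rpow _ _ fun i _ => hx₀ i, Real.rpow_add' hP (by positivity),
          Real.rpow_one]
    _ ≤ P * x i₀ := by gcongr
    _ ≤ ∏ i, x i ^ s i := by rw [mul_comm]; exact hlead

theorem summable_prod_inv_pow_of_strictAnti {r : ℕ} (hr : 0 < r) {s : Fin r → ℕ}
    (hs : ∀ i, 1 ≤ s i) (hs₀ : 2 ≤ s ⟨0, hr⟩) :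
    Summable fun n : {f : Fin r → ℕ // StrictAnti f ∧ ∀ i, 0 < f i} =>
      ∏ i, ((n.1 i : ℝ) ^ s i)⁻¹ := by
  set p : ℝ := 1 + 1 / r
  have hp : 1 < p := by simp only [p]; linarith [show (0 : ℝ) < 1 / r by positivity]
  have hg : Summable fun m : ℕ => ((m : ℝ) ^ p)⁻¹ := Real.summable_nat_rpow_inv.mpr hp
  have hpi : Summable fun n : Fin r → ℕ => ∏ i, ((n i : ℝ) ^ p)⁻¹ :=
    (hasSum_pi_prod_of_summable_norm (fun _ => hg.norm) (fun _ => hg.hasSum)).1.summable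
  refine .of_nonneg_of_le (fun n => by positivity) (fun ⟨n, hanti, hpos⟩ => ?_) (hpi.subtype _)
  have hle := prod_rpow_le_prod_pow (x := fun i => (n i : ℝ)) (s := s) ⟨0, hr⟩
    (fun i => by exact_mod_cast hpos i)
    (fun i => by exact_mod_cast hanti.antitone (show (⟨0, hr⟩ : Fin r) ≤ i from Nat.zero_le _))
    hs hs₀
  rw [Fintype.card_fin] at hle
  simp only [prod_inv_distrib]
  exact inv_anti₀ (prod_pos fun i _ => by have := hpos i; positivity) hle

theorem summable_uncurry_prod_negBinomialTerm {𝕜 : Type*} [RCLike 𝕜] {r : ℕ} (hr : 0 < r)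
    {s : Fin r → ℕ} (hs : ∀ i, 1 ≤ s i) (hs₀ : 2 ≤ s ⟨0, hr⟩) {z : 𝕜} (hz : ‖z‖ < 1 / 2) :
    Summable (uncurry fun (n : {f : Fin r → ℕ // StrictAnti f ∧ ∀ i, 0 < f i})
      (k : Fin r → ℕ) => ∏ i, negBinomialTerm (s i) (n.1 i : 𝕜) z (k i)) := by
  have hz_lt {m : ℕ} (hm : 0 < m) : ‖z‖ < ‖(m : 𝕜)‖ :=
    norm_lt_norm_natCast (hz.trans (by norm_num)) hm
  have hfactor {m : ℕ} (hm : 0 < m) (t : ℕ) :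
      ((‖(m : 𝕜)‖ - ‖z‖) ^ t)⁻¹ ≤ 2 ^ t * ((m : ℝ) ^ t)⁻¹ := by
    have hm' : (1 : ℝ) ≤ m := by exact_mod_cast hm
    rw [RCLike.norm_natCast, ← inv_pow, ← inv_pow, ← mul_pow, ← div_eq_mul_inv, ← inv_div]
    exact pow_le_pow_left₀ (inv_nonneg.mpr (by linarith))
      (inv_anti₀ (by positivity) (by linarith)) t
  have hnorm (n : {f : Fin r → ℕ // StrictAnti f ∧ ∀ i, 0 < f i}) :=
    hasSum_norm_prod_negBinomialTerm s fun i => hz_lt (n.2.2 i)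
  refine Summable.of_norm ((summable_prod_of_nonneg fun _ => norm_nonneg _).mpr
    ⟨fun n => (hnorm n).summable, ?_⟩)
  refine .of_nonneg_of_le (fun n => tsum_nonneg fun _ => norm_nonneg _) (fun n => ?_)
    ((summable_prod_inv_pow_of_strictAnti hr hs hs₀).mul_left (2 ^ ∑ i, s i))
  simp only [uncurry_apply_pair]
  rw [(hnorm n).tsum_eq, ← prod_pow_eq_pow_sum, ← prod_mul_distrib]
  exact prod_le_prod (fun i _ => inv_nonneg.mpr (pow_nonneg
    (sub_nonneg.mpr (hz_lt (n.2.2 i)).le) _)) fun i _ => hfactor (n.2.2 i) (s i)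

/-- Power series expansion of Hurwitz multizeta functions near 0, valid for `|z| < 1/2`. -/
theorem hurwitz_mzv_taylor (r : ℕ) (hr : 0 < r) (s : Fin r → ℕ)
    (h1 : ∀ i, 1 ≤ s i) (h2 : 2 ≤ s ⟨0, hr⟩) (z : ℂ) (hz : ‖z‖ < 1 / 2) :
    Summable (fun n : {f : Fin r → ℕ // StrictAnti f ∧ ∀ i, 0 < f i} =>
        ∏ i, (((n.1 i : ℂ) + z) ^ s i)⁻¹) ∧
    ∑' n : {f : Fin r → ℕ // StrictAnti f ∧ ∀ i, 0 < f i},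
        ∏ i, (((n.1 i : ℂ) + z) ^ s i)⁻¹
      = ∑' k : Fin r → ℕ,
          (∏ i, (Nat.choose (s i + k i - 1) (k i) : ℂ)) *
            (∑' n : {f : Fin r → ℕ // StrictAnti f ∧ ∀ i, 0 < f i},
                ∏ i, ((n.1 i : ℂ) ^ (s i + k i))⁻¹) *
            (-z) ^ (∑ i, k i) := by
  set F := fun (n : {f : Fin r → ℕ // StrictAnti f ∧ ∀ i, 0 < f i}) (k : Fin r → ℕ) =>
    ∏ i, negBinomialTerm (s i) (n.1 i : ℂ) z (k i)
  have hF : Summable (uncurry F) := summable_uncurry_prod_negBinomialTerm hr h1 h2 hz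
  have hsum (n : {f : Fin r → ℕ // StrictAnti f ∧ ∀ i, 0 < f i}) :
      HasSum (F n) (∏ i, (((n.1 i : ℂ) + z) ^ s i)⁻¹) :=
    hasSum_prod_negBinomialTerm s fun i =>
      norm_lt_norm_natCast (hz.trans (by norm_num)) (n.2.2 i)
  refine ⟨hF.prod.congr fun n => (hsum n).tsum_eq, ?_⟩
  calc _ = ∑' n, ∑' k, F n k := tsum_congr fun n => (hsum n).tsum_eq.symm
    _ = ∑' k, ∑' n, F n k := hF.tsum_comm.symm
    _ = _ := tsum_congr fun k => by
      simp only [F, prod_negBinomialTerm, tsum_mul_right, tsum_mul_left]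
end

section
/- The derivative with respect to z of the Hurwitz multizeta function He_+^{(s_1,...,s_r)}(z) = Σ_{0 < n_r < ... < n_1} ∏_i (n_i+z)^{-s_i} equals -Σ_{i=1}^r s_i · He_+^{s + e_i}(z), where s + e_i is the sequence with s_i replaced by s_i + 1. -/
/-! Near a non-integer `z` there are `ε, c > 0` with `c * m ≤ ‖m + w‖` for all `m : ℕ` and
`|w - z| < ε`. Hence, when all `s_i ≥ 1` and `s_1 ≥ 2`, the term `∏ (n_i + w)^(-s_i)` is bounded
by a constant times `∏ n_i^(-(1 + 1/r))`: the extra power of the largest index `n_1` dominates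
the geometric mean `(∏ n_i)^(1/r)`. This majorant is summable over all of `ℕ^r`, so the series
converges uniformly near `z` and, the terms being holomorphic, may be differentiated termwise. -/

open Finset Filter Topology

/-- The Hurwitz multizeta function `He₊^s` as a sum over strictly decreasing
positive integer tuples. -/
noncomputable def HePlus (r : ℕ) (s : Fin r → ℕ) (z : ℂ) : ℂ :=
  ∑' n : {f : Fin r → ℕ // StrictAnti f ∧ ∀ i, 0 < f i},
    ∏ i, (((n.1 i : ℂ) + z) ^ s i)⁻¹

lemma summable_fin_prod_of_nonneg {α : Type*} {g : α → ℝ} (hg : Summable g) (hg0 : 0 ≤ g)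
    (r : ℕ) : Summable fun n : Fin r → α => ∏ i, g (n i) := by
  induction r with
  | zero => exact Summable.of_finite
  | succ r ih =>
    rw [← (Fin.consEquiv fun _ => α).summable_iff]
    simpa only [Function.comp_def, Fin.consEquiv_apply, Fin.prod_univ_succ, Fin.cons_zero,
      Fin.cons_succ] using hg.mul_of_nonneg ih hg0 fun n => prod_nonneg fun i _ => hg0 _

lemma summable_prod_inv_rpow {p : ℝ} (hp : 1 < p) (r : ℕ) :
    Summable fun n : Fin r → ℕ => ∏ i, ((n i : ℝ) ^ p)⁻¹ :=
  summable_fin_prod_of_nonneg (Real.summable_nat_rpow_inv.2 hp) (fun _ => by positivity) r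

lemma prod_rpow_inv_card_le {ι : Type*} [Fintype ι] {x : ι → ℝ} (hx : 0 ≤ x) {j : ι}
    (hj : ∀ i, x i ≤ x j) : ∏ i, x i ^ ((Fintype.card ι : ℝ)⁻¹) ≤ x j := by
  have : Nonempty ι := ⟨j⟩
  have hcard : (Fintype.card ι : ℝ) ≠ 0 := by exact_mod_cast Fintype.card_ne_zero
  calc ∏ i, x i ^ ((Fintype.card ι : ℝ)⁻¹)
      ≤ ∏ _i : ι, x j ^ ((Fintype.card ι : ℝ)⁻¹) :=
        prod_le_prod (fun i _ => Real.rpow_nonneg (hx i) _)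
          fun i _ => Real.rpow_le_rpow (hx i) (hj i) (by positivity)
    _ = x j := by
        rw [prod_const, card_univ, ← Real.rpow_natCast, ← Real.rpow_mul (hx j),
          inv_mul_cancel₀ hcard, Real.rpow_one]

lemma prod_rpow_one_add_inv_card_le_prod_pow {ι : Type*} [Fintype ι]
    {x : ι → ℝ} (hx : ∀ i, 1 ≤ x i) {j : ι} (hj : ∀ i, x i ≤ x j)
    {t : ι → ℕ} (ht : ∀ i, 1 ≤ t i) (htj : 2 ≤ t j) :
    ∏ i, x i ^ (1 + (Fintype.card ι : ℝ)⁻¹) ≤ ∏ i, x i ^ t i := by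
  classical
  have hx0 : ∀ i, 0 ≤ x i := fun i => zero_le_one.trans (hx i)
  calc ∏ i, x i ^ (1 + (Fintype.card ι : ℝ)⁻¹)
      = (∏ i, x i) * ∏ i, x i ^ ((Fintype.card ι : ℝ)⁻¹) := by
        rw [← prod_mul_distrib]
        refine prod_congr rfl fun i _ => ?_
        rw [Real.rpow_add' (hx0 i) (by positivity), Real.rpow_one]
    _ ≤ (∏ i, x i) * x j := by
        gcongr
        · exact prod_nonneg fun i _ => hx0 i
        · exact prod_rpow_inv_card_le hx0 hj
    _ = x j ^ 2 * ∏ i ∈ univ.erase j, x i := by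
        rw [← mul_prod_erase univ x (mem_univ j)]; ring
    _ ≤ x j ^ t j * ∏ i ∈ univ.erase j, x i ^ t i := by
        refine mul_le_mul (pow_le_pow_right₀ (hx j) htj)
          (prod_le_prod (fun i _ => hx0 i) fun i _ =>
            le_self_pow₀ (hx i) (Nat.one_le_iff_ne_zero.1 (ht i)))
          (prod_nonneg fun i _ => hx0 i) (pow_nonneg (hx0 j) _)
    _ = ∏ i, x i ^ t i := mul_prod_erase univ (fun i => x i ^ t i) (mem_univ j)

lemma exists_pos_mul_le_norm_natCast_add {z : ℂ} (hz : ∀ m : ℕ, (m : ℂ) + z ≠ 0) :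
    ∃ δ > 0, ∀ m : ℕ, δ * m ≤ ‖(m : ℂ) + z‖ := by
  set N := ⌈2 * ‖z‖⌉₊
  have hlarge : ∀ m : ℕ, N ≤ m → (m : ℝ) / 2 ≤ ‖(m : ℂ) + z‖ := by
    intro m hm
    have hm' : 2 * ‖z‖ ≤ m := Nat.ceil_le.1 hm
    have := norm_sub_norm_le (m : ℂ) (-z)
    rw [sub_neg_eq_add, norm_neg, Complex.norm_natCast] at this
    linarith
  have hsmall : ∀ᶠ δ in 𝓝 (0 : ℝ), δ ≤ 1 / 2 ∧ ∀ m ∈ range N, δ * m < ‖(m : ℂ) + z‖ := by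
    refine (eventually_le_nhds (by norm_num)).and ((eventually_all_finset _).2 fun m _ => ?_)
    have hcont : Tendsto (fun δ : ℝ => δ * m) (𝓝 0) (𝓝 0) := by
      simpa using (continuous_mul_const (m : ℝ)).tendsto 0
    exact hcont.eventually_lt_const (norm_pos_iff.2 (hz m))
  obtain ⟨δ, ⟨hδ2, hδN⟩, hδ⟩ := (hsmall.filter_mono nhdsWithin_le_nhds |>.and
    (self_mem_nhdsWithin (s := Set.Ioi 0))).exists
  refine ⟨δ, hδ, fun m => ?_⟩
  rcases lt_or_ge m N with hm | hm
  · exact (hδN m (mem_range.2 hm)).le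
  · calc δ * m ≤ 1 / 2 * m := by gcongr
      _ ≤ ‖(m : ℂ) + z‖ := by linarith [hlarge m hm]

lemma exists_ball_forall_mul_le_norm_natCast_add {z : ℂ} (hz : ∀ m : ℕ, (m : ℂ) + z ≠ 0) :
    ∃ ε > 0, ∃ c > 0, ∀ w ∈ Metric.ball z ε, ∀ m : ℕ, c * m ≤ ‖(m : ℂ) + w‖ := by
  obtain ⟨δ, hδ, hδz⟩ := exists_pos_mul_le_norm_natCast_add hz
  refine ⟨δ / 2, by positivity, δ / 2, by positivity, fun w hw m => ?_⟩
  rcases Nat.eq_zero_or_pos m with rfl | hm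
  · simp
  have hdist : ‖(m : ℂ) + z‖ - ‖(m : ℂ) + w‖ ≤ ‖w - z‖ := by
    simpa [norm_sub_rev] using norm_sub_norm_le ((m : ℂ) + z) ((m : ℂ) + w)
  have hm1 : (1 : ℝ) ≤ m := by exact_mod_cast hm
  rw [Metric.mem_ball, dist_eq_norm] at hw
  nlinarith [hδz m]

lemma norm_prod_inv_pow_natCast_add_le {ι : Type*} [Fintype ι] {t n : ι → ℕ} {j : ι}
    (ht : ∀ i, 1 ≤ t i) (htj : 2 ≤ t j) (hn : ∀ i, 0 < n i) (hnj : ∀ i, n i ≤ n j)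
    {c : ℝ} (hc : 0 < c) {w : ℂ} (hw : ∀ m : ℕ, c * m ≤ ‖(m : ℂ) + w‖) :
    ‖∏ i, (((n i : ℂ) + w) ^ t i)⁻¹‖
      ≤ (c ^ ∑ i, t i)⁻¹ * ∏ i, ((n i : ℝ) ^ (1 + (Fintype.card ι : ℝ)⁻¹))⁻¹ := by
  have hn1 : ∀ i, (1 : ℝ) ≤ n i := fun i => by exact_mod_cast hn i
  calc ‖∏ i, (((n i : ℂ) + w) ^ t i)⁻¹‖ = ∏ i, (‖(n i : ℂ) + w‖ ^ t i)⁻¹ := by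
        simp only [norm_prod, norm_inv, norm_pow]
    _ ≤ ∏ i, ((c * n i) ^ t i)⁻¹ := by
        refine prod_le_prod (fun i _ => by positivity) fun i _ => ?_
        have : 0 < c * n i := mul_pos hc (by exact_mod_cast hn i)
        gcongr
        exact hw (n i)
    _ = (c ^ ∑ i, t i)⁻¹ * (∏ i, (n i : ℝ) ^ t i)⁻¹ := by
        simp only [mul_pow, prod_mul_distrib, prod_pow_eq_pow_sum, mul_inv, prod_inv_distrib]
    _ ≤ (c ^ ∑ i, t i)⁻¹ * ∏ i, ((n i : ℝ) ^ (1 + (Fintype.card ι : ℝ)⁻¹))⁻¹ := by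
        rw [prod_inv_distrib]
        have : 0 < ∏ i, (n i : ℝ) ^ (1 + (Fintype.card ι : ℝ)⁻¹) :=
          prod_pos fun i _ => Real.rpow_pos_of_pos (zero_lt_one.trans_le (hn1 i)) _
        exact mul_le_mul_of_nonneg_left (inv_anti₀ this (prod_rpow_one_add_inv_card_le_prod_pow
          hn1 (fun i => by exact_mod_cast hnj i) ht htj)) (by positivity)

lemma exists_summable_bound_hePlus_term {r : ℕ} (hr : 0 < r) {t : Fin r → ℕ} (ht : ∀ i, 1 ≤ t i)
    (ht0 : 2 ≤ t ⟨0, hr⟩) {c : ℝ} (hc : 0 < c) :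
    ∃ u : {f : Fin r → ℕ // StrictAnti f ∧ ∀ i, 0 < f i} → ℝ, Summable u ∧
      ∀ n w, (∀ m : ℕ, c * m ≤ ‖(m : ℂ) + w‖) → ‖∏ i, (((n.1 i : ℂ) + w) ^ t i)⁻¹‖ ≤ u n := by
  have hp : 1 < 1 + (r : ℝ)⁻¹ := lt_add_of_pos_right 1 (by positivity)
  refine ⟨_, ((summable_prod_inv_rpow hp r).subtype _).mul_left (c ^ ∑ i, t i)⁻¹,
    fun n w hw => ?_⟩
  simpa using norm_prod_inv_pow_natCast_add_le ht ht0 n.2.2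
    (fun i => n.2.1.antitone (Nat.zero_le i.1)) hc hw

lemma hasDerivAt_inv_pow_add (k : ℕ) {a z : ℂ} (h : a + z ≠ 0) :
    HasDerivAt (fun w => ((a + w) ^ k)⁻¹) (-k * ((a + z) ^ (k + 1))⁻¹) z := by
  refine (((hasDerivAt_pow k (a + z)).inv (pow_ne_zero k h)).comp_const_add a z).congr_deriv ?_
  rcases k with _ | k
  · simp
  · rw [Nat.add_sub_cancel]
    field_simp
    ring

lemma hasDerivAt_prod_inv_pow_add {ι : Type*} [Fintype ι] [DecidableEq ι] (t : ι → ℕ)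
    {a : ι → ℂ} {z : ℂ} (h : ∀ i, a i + z ≠ 0) :
    HasDerivAt (fun w => ∏ i, ((a i + w) ^ t i)⁻¹)
      (-∑ i, t i * ∏ j, ((a j + z) ^ Function.update t i (t i + 1) j)⁻¹) z := by
  refine (HasDerivAt.fun_finsetProd fun i (_ : i ∈ univ) =>
    hasDerivAt_inv_pow_add (t i) (h i)).congr_deriv ?_
  rw [← sum_neg_distrib]
  refine sum_congr rfl fun i _ => ?_
  have hupd : ∏ j, ((a j + z) ^ Function.update t i (t i + 1) j)⁻¹
      = ((a i + z) ^ (t i + 1))⁻¹ * ∏ j ∈ univ.erase i, ((a j + z) ^ t j)⁻¹ := by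
    rw [← mul_prod_erase univ _ (mem_univ i), Function.update_self]
    congr 1
    exact prod_congr rfl fun j hj => by rw [Function.update_of_ne (ne_of_mem_erase hj)]
  rw [hupd, smul_eq_mul]
  ring

lemma hasDerivAt_tsum_of_summable_norm {ι : Type*} {F F' : ι → ℂ → ℂ} {U : Set ℂ} {u : ι → ℝ}
    (hu : Summable u) (hU : IsOpen U) (hF : ∀ i, ∀ w ∈ U, HasDerivAt (F i) (F' i w) w)
    (hF_le : ∀ i, ∀ w ∈ U, ‖F i w‖ ≤ u i) {z : ℂ} (hz : z ∈ U) :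
    HasDerivAt (fun w => ∑' i, F i w) (∑' i, F' i z) z := by
  have hdiff i : DifferentiableOn ℂ (F i) U := fun w hw =>
    (hF i w hw).differentiableAt.differentiableWithinAt
  have hsum := Complex.hasSum_deriv_of_summable_norm hu hdiff hU hF_le hz
  rw [tsum_congr fun i => (hF i z hz).deriv.symm, hsum.tsum_eq]
  exact ((Complex.differentiableOn_tsum_of_summable_norm hu hdiff hU hF_le).differentiableAt
    (hU.mem_nhds hz)).hasDerivAt

/-- Differentiation property of Hurwitz multizeta functions. -/
theorem hurwitz_mzv_deriv (r : ℕ) (hr : 0 < r) (s : Fin r → ℕ)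
    (h1 : ∀ i, 1 ≤ s i) (h2 : 2 ≤ s ⟨0, hr⟩) (z : ℂ) (hz : ∀ n : ℤ, z ≠ (n : ℂ)) :
    HasDerivAt (HePlus r s)
      (-∑ i, (s i : ℂ) * HePlus r (Function.update s i (s i + 1)) z) z := by
  obtain ⟨ε, hε, c, hc, hball⟩ := exists_ball_forall_mul_le_norm_natCast_add (z := z)
    fun m h => hz (-m) (by push_cast; linear_combination h)
  have hzU : z ∈ Metric.ball z ε := Metric.mem_ball_self hε
  have hne : ∀ w ∈ Metric.ball z ε, ∀ m : ℕ, 0 < m → (m : ℂ) + w ≠ 0 := fun w hw m hm h => by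
    have := hball w hw m
    rw [h, norm_zero] at this
    exact (mul_pos hc (by exact_mod_cast hm)).not_ge this
  have hsum_update i : Summable fun n : {f : Fin r → ℕ // StrictAnti f ∧ ∀ i, 0 < f i} =>
      ∏ j, (((n.1 j : ℂ) + z) ^ Function.update s i (s i + 1) j)⁻¹ := by
    have hle : s ≤ Function.update s i (s i + 1) :=
      le_update_iff.2 ⟨Nat.le_succ _, fun _ _ => le_rfl⟩
    obtain ⟨v, hv, hvb⟩ :=
      exists_summable_bound_hePlus_term hr (fun j => (h1 j).trans (hle j)) (h2.trans (hle _)) hc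
    exact hv.of_norm_bounded fun n => hvb n z (hball z hzU)
  obtain ⟨u, hu, hbound⟩ := exists_summable_bound_hePlus_term hr h1 h2 hc
  refine (hasDerivAt_tsum_of_summable_norm hu Metric.isOpen_ball
    (fun n w hw => hasDerivAt_prod_inv_pow_add s fun i => hne w hw _ (n.2.2 i))
    (fun n w hw => hbound n w (hball w hw)) hzU).congr_deriv ?_
  rw [tsum_neg, Summable.tsum_finsetSum fun i _ => (hsum_update i).mul_left _]
  simp_rw [tsum_mul_left]
  rfl
end

section
/- Let A be a commutative ℚ-algebra and γ ∈ A. Define Ne_γ on words over the positive integers by Ne_γ^{w} = γ^r / r! if w = (1,1,...,1) of length r (including Ne_γ^∅ = 1), and Ne_γ^{w} = 0 otherwise. Then Ne_γ is symmetrel: Ne_γ^P · Ne_γ^Q = Σ_{w ∈ stuffle(P,Q)} Ne_γ^w for all words P, Q. -/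
/-- The stuffle (quasi-shuffle) product of two words over `ℕ+`, as a multiset of words. -/
def stuffle : List ℕ+ → List ℕ+ → Multiset (List ℕ+)
  | [], q => {q}
  | p :: ps, [] => {p :: ps}
  | a :: p, b :: q =>
      (stuffle p (b :: q)).map (a :: ·) + (stuffle (a :: p) q).map (b :: ·) +
        (stuffle p q).map ((a + b) :: ·)
termination_by p q => p.length + q.length

open scoped Classical in
/-- The mould `Ne_γ`: `γ^r/r!` on the word `(1,…,1)` of length `r`, `0` elsewhere. -/
noncomputable def NeMould {A : Type*} [CommRing A] [Algebra ℚ A] (γ : A) (l : List ℕ+) : A :=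
  if ∀ x ∈ l, x = 1 then ((l.length.factorial : ℚ))⁻¹ • γ ^ l.length else 0

lemma stuffle_ones : ∀ p q : List ℕ+, ∀ w ∈ stuffle p q, (∀ x ∈ w, x = 1) →
    (∀ x ∈ p, x = 1) ∧ (∀ x ∈ q, x = 1) ∧ w.length = p.length + q.length := by
  intro p q
  induction p, q using stuffle.induct with
  | case1 q =>
      intro w hw h
      simp only [stuffle, Multiset.mem_singleton] at hw
      subst hw
      simpa using h
  | case2 p ps =>
      intro w hw h
      simp only [stuffle, Multiset.mem_singleton] at hw
      subst hw
      simpa using h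
  | case3 a p b q ih1 ih2 ih3 =>
      intro w hw h
      simp only [stuffle, Multiset.mem_add, Multiset.mem_map] at hw
      rcases hw with (⟨w', hw', rfl⟩ | ⟨w', hw', rfl⟩) | ⟨w', hw', rfl⟩
      · have ha : a = 1 := h a (by simp)
        have := ih1 w' hw' (fun x hx => h x (by simp [hx]))
        subst ha
        refine ⟨by simpa using this.1, this.2.1, by simp [this.2.2]; omega⟩
      · have hb : b = 1 := h b (by simp)
        have := ih2 w' hw' (fun x hx => h x (by simp [hx]))
        subst hb
        refine ⟨this.1, by simpa using this.2.1, by simp [this.2.2]; omega⟩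
      · exfalso
        have := h (a + b) (by simp)
        have h2 : 1 < a + b := lt_of_le_of_lt b.one_le (PNat.lt_add_left b a)
        exact absurd this (ne_of_gt h2)

section
variable {A : Type*} [CommRing A] [Algebra ℚ A] (γ : A)

lemma NeMould_not_ones {l : List ℕ+} (h : ¬ ∀ x ∈ l, x = 1) : NeMould γ l = 0 := by
  rw [NeMould, if_neg h]

lemma NeMould_cons_ne_one {a : ℕ+} (ha : a ≠ 1) (w : List ℕ+) : NeMould γ (a :: w) = 0 := by
  refine NeMould_not_ones γ ?_
  intro h
  exact ha (h a (by simp))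

lemma NeMould_cons_one (w : List ℕ+) :
    NeMould γ ((1 : ℕ+) :: w) = ((w.length + 1 : ℚ))⁻¹ • (γ * NeMould γ w) := by
  by_cases h : ∀ x ∈ w, x = 1
  · have h1 : ∀ x ∈ (1 : ℕ+) :: w, x = 1 := by
      intro x hx
      rcases List.mem_cons.mp hx with rfl | hx
      · rfl
      · exact h x hx
    rw [NeMould, NeMould, if_pos h1, if_pos h]
    rw [mul_smul_comm, smul_smul]
    rw [List.length_cons, Nat.factorial_succ, ← pow_succ']
    congr 1
    push_cast
    rw [mul_inv]
  · have h1 : ¬ ∀ x ∈ (1 : ℕ+) :: w, x = 1 := by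
      intro h1
      exact h fun x hx => h1 x (List.mem_cons_of_mem _ hx)
    rw [NeMould, NeMould, if_neg h1, if_neg h, mul_zero, smul_zero]

set_option maxHeartbeats 1000000 in
lemma stuffle_rep (m n : ℕ) :
    ((stuffle (List.replicate m 1) (List.replicate n 1)).map (NeMould γ)).sum
      = ((m.factorial * n.factorial : ℚ))⁻¹ • γ ^ (m + n) := by
  induction m generalizing n with
  | zero =>
      simp only [List.replicate_zero, stuffle, Multiset.map_singleton, Multiset.sum_singleton]
      rw [NeMould, if_pos (by simp)]
      simp
  | succ m ihm =>
      induction n with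
      | zero =>
          rw [List.replicate_succ]
          simp only [List.replicate_zero, stuffle, Multiset.map_singleton,
            Multiset.sum_singleton]
          rw [NeMould, if_pos (by simp [List.eq_of_mem_replicate])]
          simp [← List.replicate_succ]
      | succ n ihn =>
          rw [List.replicate_succ, List.replicate_succ (n := n)]
          simp only [stuffle]
          rw [Multiset.map_add, Multiset.map_add, Multiset.sum_add, Multiset.sum_add,
            Multiset.map_map, Multiset.map_map, Multiset.map_map]
          have key : ∀ (p q : List ℕ+), ∀ w ∈ stuffle p q,
              (NeMould γ ∘ (fun l => (1 : ℕ+) :: l)) w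
                = (((p.length + q.length + 1 : ℕ) : ℚ))⁻¹ • γ * NeMould γ w := by
            intro p q w hw
            simp only [Function.comp_apply]
            rw [NeMould_cons_one, smul_mul_assoc]
            by_cases h : ∀ x ∈ w, x = 1
            · have hl := (stuffle_ones p q w hw h).2.2
              rw [hl]
              push_cast
              ring_nf
            · rw [NeMould_not_ones γ h]
              simp
          rw [Multiset.map_congr rfl (key _ _), Multiset.map_congr rfl (key _ _)]
          rw [Multiset.sum_map_mul_left, Multiset.sum_map_mul_left]
          have hz : ((stuffle (List.replicate m 1) (List.replicate n 1)).map
              (NeMould γ ∘ (fun l => ((1 : ℕ+) + 1) :: l))).sum = 0 := by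
            refine Multiset.sum_eq_zero ?_
            intro x hx
            obtain ⟨w, _, rfl⟩ := Multiset.mem_map.mp hx
            exact NeMould_cons_ne_one γ (by decide) w
          rw [hz, add_zero]
          simp only [← List.replicate_succ]
          rw [ihm (n + 1), ihn]
          simp only [List.length_replicate]
          have hstep : ∀ (c d e f g : ℚ) (k : ℕ),
              c * d + e * f = g →
              c • γ * (d • γ ^ k) + e • γ * (f • γ ^ k) = g • γ ^ (k + 1) := by
            intro c d e f g k h
            rw [smul_mul_assoc, smul_mul_assoc, mul_smul_comm, mul_smul_comm,
              smul_smul, smul_smul, ← pow_succ', ← add_smul, h]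
          have e3 : m + (n + 1) = m + 1 + n := by omega
          have e4 : m + 1 + (n + 1) = m + 1 + n + 1 := by omega
          rw [e3, e4]
          refine hstep _ _ _ _ _ _ ?_
          have hK : ((m + 1 + n + 1 : ℕ) : ℚ) ≠ 0 := Nat.cast_ne_zero.mpr (by omega)
          have hm : ((m + 1).factorial : ℚ) ≠ 0 := Nat.cast_ne_zero.mpr (Nat.factorial_ne_zero _)
          have hn : ((n + 1).factorial : ℚ) ≠ 0 := Nat.cast_ne_zero.mpr (Nat.factorial_ne_zero _)
          have hm' : ((m).factorial : ℚ) ≠ 0 := Nat.cast_ne_zero.mpr (Nat.factorial_ne_zero _)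
          have hn' : ((n).factorial : ℚ) ≠ 0 := Nat.cast_ne_zero.mpr (Nat.factorial_ne_zero _)
          rw [Nat.factorial_succ (m), Nat.factorial_succ (n)]
          push_cast
          field_simp
          ring

end

/-- `Ne_γ` is symmetrel. -/
theorem Ne_symmetrel {A : Type*} [CommRing A] [Algebra ℚ A] (γ : A) :
    ∀ p q : List ℕ+, NeMould γ p * NeMould γ q = ((stuffle p q).map (NeMould γ)).sum := by
  intro p q
  by_cases hp : ∀ x ∈ p, x = 1
  · by_cases hq : ∀ x ∈ q, x = 1
    · have hp' : p = List.replicate p.length 1 := List.eq_replicate_iff.mpr ⟨rfl, hp⟩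
      have hq' : q = List.replicate q.length 1 := List.eq_replicate_iff.mpr ⟨rfl, hq⟩
      rw [hp', hq', stuffle_rep]
      rw [NeMould, NeMould, if_pos (fun x hx => List.eq_of_mem_replicate hx),
        if_pos (fun x hx => List.eq_of_mem_replicate hx)]
      simp only [List.length_replicate]
      rw [smul_mul_smul_comm, ← pow_add, mul_inv]
    · rw [NeMould_not_ones γ hq, mul_zero]
      refine (Multiset.sum_eq_zero ?_).symm
      intro x hx
      obtain ⟨w, hw, rfl⟩ := Multiset.mem_map.mp hx
      refine NeMould_not_ones γ ?_
      intro h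
      exact hq (stuffle_ones p q w hw h).2.1
  · rw [NeMould_not_ones γ hp, zero_mul]
    refine (Multiset.sum_eq_zero ?_).symm
    intro x hx
    obtain ⟨w, hw, rfl⟩ := Multiset.mem_map.mp hx
    refine NeMould_not_ones γ ?_
    intro h
    exact hp (stuffle_ones p q w hw h).1
end

section
/- Let A be a commutative ℚ-algebra, Se a symmetrel mould on all words over ℕ* with values in A, and for θ₁, θ₂ ∈ A let Se_{θ₁} and Se_{θ₂} denote the unique symmetrel extensions agreeing with Se on words with first letter ≥ 2 and taking values θ₁ and θ₂ respectively on the word (1). Then Se_{θ₁} = Ne_{θ₁-θ₂} × Se_{θ₂}, i.e., Se_{θ₁}^w = Σ_{w = u·v} Ne_{θ₁-θ₂}^u · Se_{θ₂}^v for every word w, where Ne_γ^{(1^{[r]})} = γ^r/r! and Ne_γ vanishes on all other nonempty words. -/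
/-- A word is admissible if its first letter (if any) is at least 2. -/
def Adm (l : List ℕ+) : Prop := ∀ a ∈ l.head?, 2 ≤ a

/-!
Both sides are symmetrel. For `Ne_γ` this is a count: the words of `1^m ⧢ 1^n` made of ones
are the `(m+n).choose m` shuffles (every contraction creates a letter `≥ 2`), and
`γ^m/m! · γ^n/n! = (m+n).choose m · γ^(m+n)/(m+n)!`. For the mould product it is the
compatibility of the stuffle with deconcatenation: cutting each word of `p ⧢ q` into a prefix
and a suffix is the same as cutting `p` and `q` and stuffling prefixes and suffixes separately.
Since `Ne_γ` vanishes on words with first letter `≥ 2`, both sides agree with `Se` on admissible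
words, and both take the value `θ₁` on `(1)`.

A symmetrel mould is determined by these values, by induction on the number of leading ones:
if `u` begins with exactly `k` ones, then `(1) ⧢ u` contains `1·u` exactly `k + 1` times and
otherwise only words with at most `k` leading ones, so dividing by `k + 1` recovers the value on
`1·u` from values already known.
-/

theorem PNat.add_ne_one (a b : ℕ+) : a + b ≠ 1 :=
  (_root_.one_le.trans_lt (PNat.lt_add_right a b)).ne'

theorem Finset.sum_range_succ_sum_range_succ {β : Type*} [AddCommMonoid β] (m n : ℕ)
    (f : ℕ → ℕ → β) :
    ∑ i ∈ Finset.range (m + 1), ∑ j ∈ Finset.range (n + 1), f i j =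
      f 0 0 + ∑ j ∈ Finset.range n, f 0 (j + 1) + ∑ i ∈ Finset.range m, f (i + 1) 0 +
        ∑ i ∈ Finset.range m, ∑ j ∈ Finset.range n, f (i + 1) (j + 1) := by
  simp only [Finset.sum_range_succ', Finset.sum_add_distrib]
  abel

theorem Multiset.sum_map_ite_const {α M : Type*} [AddCommMonoid M] (s : Multiset α) (P : α → Prop)
    [DecidablePred P] (c : M) : (s.map fun x ↦ if P x then c else 0).sum = s.countP P • c := by
  induction s using Multiset.induction_on with
  | empty => simp
  | cons a s ih => by_cases h : P a <;> simp [h, ih, add_smul, add_comm]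

theorem List.sum_map_coe_of_forall_eq_one {x : List ℕ+} (hx : ∀ l ∈ x, l = 1) :
    (x.map ((↑) : ℕ+ → ℕ)).sum = x.length := by
  simp [List.map_congr_left (fun l hl ↦ congrArg PNat.val (hx l hl))]

theorem adm_nil : Adm [] := by
  simp [Adm]

theorem stuffle_nil_left (q : List ℕ+) : stuffle [] q = {q} := by
  cases q <;> simp [stuffle]

theorem stuffle_nil_right (p : List ℕ+) : stuffle p [] = {p} := by
  cases p <;> simp [stuffle]

theorem stuffle_cons_cons (a b : ℕ+) (p q : List ℕ+) :
    stuffle (a :: p) (b :: q) =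
      (stuffle p (b :: q)).map (a :: ·) + (stuffle (a :: p) q).map (b :: ·) +
        (stuffle p q).map ((a + b) :: ·) := by
  simp [stuffle]

section Mould

variable {A : Type*}

def stuffleSum [AddCommMonoid A] (M : List ℕ+ → A) (p q : List ℕ+) : A :=
  ((stuffle p q).map M).sum

def IsSymmetrel [Semiring A] (M : List ℕ+ → A) : Prop :=
  ∀ p q, M p * M q = stuffleSum M p q

def mouldMul [Semiring A] (M N : List ℕ+ → A) (w : List ℕ+) : A :=
  ∑ k ∈ Finset.range (w.length + 1), M (w.take k) * N (w.drop k)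

section AddCommMonoid

variable [AddCommMonoid A]

@[simp]
theorem stuffleSum_nil_left (M : List ℕ+ → A) (q : List ℕ+) : stuffleSum M [] q = M q := by
  simp [stuffleSum, stuffle_nil_left]

@[simp]
theorem stuffleSum_nil_right (M : List ℕ+ → A) (p : List ℕ+) : stuffleSum M p [] = M p := by
  simp [stuffleSum, stuffle_nil_right]

theorem stuffleSum_cons_cons (M : List ℕ+ → A) (a b : ℕ+) (p q : List ℕ+) :
    stuffleSum M (a :: p) (b :: q) =
      stuffleSum (fun x ↦ M (a :: x)) p (b :: q) + stuffleSum (fun x ↦ M (b :: x)) (a :: p) q +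
        stuffleSum (fun x ↦ M ((a + b) :: x)) p q := by
  simp [stuffleSum, stuffle_cons_cons]

theorem stuffleSum_add (M N : List ℕ+ → A) (p q : List ℕ+) :
    stuffleSum (fun x ↦ M x + N x) p q = stuffleSum M p q + stuffleSum N p q :=
  Multiset.sum_map_add

end AddCommMonoid

section Semiring

variable [Semiring A]

theorem stuffleSum_const_mul (c : A) (M : List ℕ+ → A) (p q : List ℕ+) :
    stuffleSum (fun x ↦ c * M x) p q = c * stuffleSum M p q :=
  Multiset.sum_map_mul_left

theorem IsSymmetrel.mul_nil {M : List ℕ+ → A} (hM : IsSymmetrel M) (p : List ℕ+) :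
    M p * M [] = M p := by
  rw [hM, stuffleSum_nil_right]

@[simp]
theorem mouldMul_nil (M N : List ℕ+ → A) : mouldMul M N [] = M [] * N [] := by
  simp [mouldMul]

theorem mouldMul_cons (M N : List ℕ+ → A) (a : ℕ+) (w : List ℕ+) :
    mouldMul M N (a :: w) = M [] * N (a :: w) + mouldMul (fun u ↦ M (a :: u)) N w := by
  rw [mouldMul, List.length_cons, Finset.sum_range_succ', add_comm]
  simp [mouldMul]

theorem stuffleSum_mouldMul (M N : List ℕ+ → A) (p q : List ℕ+) :
    stuffleSum (mouldMul M N) p q =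
      ∑ i ∈ Finset.range (p.length + 1), ∑ j ∈ Finset.range (q.length + 1),
        stuffleSum M (p.take i) (q.take j) * stuffleSum N (p.drop i) (q.drop j) := by
  induction p, q using stuffle.induct generalizing M with
  | case1 q => simp [mouldMul]
  | case2 a p => simp [mouldMul]
  | case3 a p b q ih₁ ih₂ ih₃ =>
    have hcons (c : ℕ+) : (fun x ↦ mouldMul M N (c :: x)) =
        fun x ↦ M [] * N (c :: x) + mouldMul (fun u ↦ M (c :: u)) N x :=
      funext (mouldMul_cons M N c)
    rw [stuffleSum_cons_cons, hcons, hcons, hcons]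
    simp only [stuffleSum_add, stuffleSum_const_mul, ih₁, ih₂, ih₃, List.length_cons]
    -- peel the first letters off both words on the right, and off `b :: q` in `ih₁` and
    -- `a :: p` in `ih₂`, after which both sides are sums of the same terms
    conv_rhs => rw [Finset.sum_range_succ_sum_range_succ]
    simp only [Finset.sum_range_succ' (n := q.length + 1),
      Finset.sum_range_succ' (n := p.length + 1), List.take_succ_cons, List.drop_succ_cons,
      List.take_zero, List.drop_zero, stuffleSum_nil_left, stuffleSum_nil_right,
      stuffleSum_cons_cons, mul_add, add_mul, Finset.sum_add_distrib]
    abel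

end Semiring

theorem IsSymmetrel.mouldMul [CommSemiring A] {M N : List ℕ+ → A} (hM : IsSymmetrel M)
    (hN : IsSymmetrel N) : IsSymmetrel (mouldMul M N) := by
  intro p q
  rw [stuffleSum_mouldMul, _root_.mouldMul, _root_.mouldMul, Finset.sum_mul_sum]
  refine Finset.sum_congr rfl fun i _ ↦ Finset.sum_congr rfl fun j _ ↦ ?_
  rw [← hM, ← hN, mul_mul_mul_comm]

end Mould

theorem sum_coe_of_mem_stuffle {p q x : List ℕ+} (hx : x ∈ stuffle p q) :
    (x.map (↑)).sum = (p.map ((↑) : ℕ+ → ℕ)).sum + (q.map (↑)).sum := by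
  induction p, q using stuffle.induct generalizing x with
  | case1 q => simp_all [stuffle_nil_left]
  | case2 a p => simp_all [stuffle_nil_right]
  | case3 a p b q ih₁ ih₂ ih₃ =>
    simp only [stuffle_cons_cons, Multiset.mem_add, Multiset.mem_map] at hx
    rcases hx with (⟨y, hy, rfl⟩ | ⟨y, hy, rfl⟩) | ⟨y, hy, rfl⟩
    · simp [ih₁ hy]; ring
    · simp [ih₂ hy]; ring
    · simp [ih₃ hy]; ring

theorem countP_stuffle_allOnes (p q : List ℕ+) :
    (stuffle p q).countP (fun x ↦ ∀ l ∈ x, l = 1) =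
      if (∀ l ∈ p, l = 1) ∧ (∀ l ∈ q, l = 1) then (p.length + q.length).choose p.length else 0 := by
  have hmap (c : ℕ+) (s : Multiset (List ℕ+)) :
      (s.map (c :: ·)).countP (fun x ↦ ∀ l ∈ x, l = 1) =
        if c = 1 then s.countP (fun x ↦ ∀ l ∈ x, l = 1) else 0 := by
    split_ifs with hc <;> simp [Multiset.countP_map, ← Multiset.countP_eq_card_filter, hc]
  induction p, q using stuffle.induct with
  | case1 q => simp [stuffle_nil_left, ← Multiset.cons_zero, Multiset.countP_cons]
  | case2 a p => simp [stuffle_nil_right, ← Multiset.cons_zero, Multiset.countP_cons]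
  | case3 a p b q ih₁ ih₂ ih₃ =>
    simp only [stuffle_cons_cons, Multiset.countP_add, hmap, ih₁, ih₂, ih₃,
      if_neg (PNat.add_ne_one a b), add_zero, List.forall_mem_cons, List.length_cons]
    by_cases ha : a = 1 <;> by_cases hb : b = 1 <;> simp [ha, hb]
    split_ifs
    · rw [show p.length + 1 + (q.length + 1) = p.length + q.length + 1 + 1 by omega,
        Nat.choose_succ_succ', Nat.add_right_comm _ 1, add_assoc]
    · rfl

section NeMould

variable {A : Type*} [CommRing A] [Algebra ℚ A] (γ : A)

theorem neMould_of_forall_eq_one {l : List ℕ+} (hl : ∀ x ∈ l, x = 1) :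
    NeMould γ l = (l.length.factorial : ℚ)⁻¹ • γ ^ l.length :=
  if_pos hl

theorem neMould_of_not_forall_eq_one {l : List ℕ+} (hl : ¬∀ x ∈ l, x = 1) : NeMould γ l = 0 :=
  if_neg hl

@[simp]
theorem neMould_nil : NeMould γ [] = 1 := by
  simp [neMould_of_forall_eq_one]

@[simp]
theorem neMould_singleton_one : NeMould γ [1] = γ := by
  simp [neMould_of_forall_eq_one]

theorem neMould_cons_of_ne_one {a : ℕ+} (ha : a ≠ 1) (l : List ℕ+) : NeMould γ (a :: l) = 0 :=
  neMould_of_not_forall_eq_one γ (by simp [ha])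

theorem isSymmetrel_neMould : IsSymmetrel (NeMould γ) := by
  intro p q
  have hterm : ∀ x ∈ stuffle p q,
      NeMould γ x = if ∀ l ∈ x, l = 1 then
        ((p.length + q.length).factorial : ℚ)⁻¹ • γ ^ (p.length + q.length) else 0 := by
    intro x hx
    split_ifs with hx1
    · have ⟨hp, hq⟩ : (∀ l ∈ p, l = 1) ∧ ∀ l ∈ q, l = 1 := by
        by_contra hpq
        have h := countP_stuffle_allOnes p q
        rw [if_neg hpq, Multiset.countP_eq_zero] at h
        exact h x hx hx1
      have hlen := sum_coe_of_mem_stuffle hx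
      rw [List.sum_map_coe_of_forall_eq_one hx1, List.sum_map_coe_of_forall_eq_one hp,
        List.sum_map_coe_of_forall_eq_one hq] at hlen
      rw [neMould_of_forall_eq_one γ hx1, hlen]
    · exact neMould_of_not_forall_eq_one γ hx1
  rw [stuffleSum, Multiset.map_congr rfl hterm, Multiset.sum_map_ite_const, countP_stuffle_allOnes]
  split_ifs with hpq
  · rw [neMould_of_forall_eq_one γ hpq.1, neMould_of_forall_eq_one γ hpq.2, smul_mul_smul_comm,
      ← pow_add, ← Nat.cast_smul_eq_nsmul ℚ, smul_smul, Nat.cast_add_choose]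
    congr 1
    field_simp
  · rw [zero_smul]
    rcases not_and_or.mp hpq with h | h <;> simp [neMould_of_not_forall_eq_one γ h]

end NeMould

theorem ne_one_of_adm {a : ℕ+} {l : List ℕ+} (h : Adm (a :: l)) : a ≠ 1 := by
  rintro rfl
  exact absurd (h 1 rfl) (by decide)

theorem adm_cons_of_ne_one {a : ℕ+} (ha : a ≠ 1) (l : List ℕ+) : Adm (a :: l) := by
  rintro x ⟨⟩
  simpa [← PNat.coe_le_coe, ← PNat.coe_eq_one_iff, Nat.two_le_iff] using ha

theorem mouldMul_neMould_of_adm {A : Type*} [CommRing A] [Algebra ℚ A] (γ : A)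
    (N : List ℕ+ → A) {w : List ℕ+} (hw : Adm w) : mouldMul (NeMould γ) N w = N w := by
  cases w with
  | nil => simp
  | cons a u =>
    rw [mouldMul_cons, neMould_nil, one_mul, add_eq_left]
    simp [mouldMul, neMould_cons_of_ne_one γ (ne_one_of_adm hw)]

def leadingOnes : List ℕ+ → ℕ
  | [] => 0
  | a :: l => if a = 1 then leadingOnes l + 1 else 0

theorem stuffle_singleton_one_cons (b : ℕ+) (q : List ℕ+) :
    stuffle [1] (b :: q) = (1 :: b :: q) ::ₘ ((stuffle [1] q).map (b :: ·) + {(1 + b) :: q}) := by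
  rw [stuffle_cons_cons, stuffle_nil_left, stuffle_nil_left, Multiset.map_singleton,
    Multiset.map_singleton, add_assoc, Multiset.singleton_add]

theorem exists_stuffle_singleton_one (u : List ℕ+) :
    ∃ R, stuffle [1] u = Multiset.replicate (leadingOnes u + 1) (1 :: u) + R ∧
      ∀ x ∈ R, leadingOnes x ≤ leadingOnes u := by
  induction u with
  | nil => exact ⟨0, by simp [stuffle_nil_right, leadingOnes], by simp⟩
  | cons b q ih =>
    obtain ⟨R, hR, hle⟩ := ih
    by_cases hb : b = 1
    · subst hb
      refine ⟨R.map (1 :: ·) + {(1 + 1) :: q}, ?_, ?_⟩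
      · rw [stuffle_singleton_one_cons, hR, leadingOnes, if_pos rfl]
        simp [Multiset.replicate_succ, add_assoc]
      · simp only [Multiset.mem_add, Multiset.mem_map, Multiset.mem_singleton]
        rintro x (⟨y, hy, rfl⟩ | rfl)
        · simp [leadingOnes, hle y hy]
        · simp [leadingOnes, PNat.add_ne_one]
    · refine ⟨(stuffle [1] q).map (b :: ·) + {(1 + b) :: q}, ?_, ?_⟩
      · rw [stuffle_singleton_one_cons, leadingOnes, if_neg hb, Multiset.replicate_one,
          Multiset.singleton_add]
      · simp only [Multiset.mem_add, Multiset.mem_map, Multiset.mem_singleton]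
        rintro x (⟨y, hy, rfl⟩ | rfl) <;> simp [leadingOnes, hb, PNat.add_ne_one]

theorem IsSymmetrel.eq_of_adm {A : Type*} [Ring A] [IsAddTorsionFree A] {U V : List ℕ+ → A}
    (hU : IsSymmetrel U) (hV : IsSymmetrel V) (hadm : ∀ l, Adm l → U l = V l)
    (hone : U [1] = V [1]) : U = V := by
  funext w
  induction hn : leadingOnes w using Nat.strong_induction_on generalizing w with
  | _ n ih =>
    rcases w with _ | ⟨a, u⟩
    · exact hadm [] adm_nil
    by_cases ha : a = 1
    swap
    · exact hadm _ (adm_cons_of_ne_one ha u)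
    subst ha
    have hu : leadingOnes u < n := by simp [← hn, leadingOnes]
    obtain ⟨R, hR, hle⟩ := exists_stuffle_singleton_one u
    have hRUV : (R.map U).sum = (R.map V).sum :=
      congrArg Multiset.sum (Multiset.map_congr rfl fun x hx ↦ ih _ ((hle x hx).trans_lt hu) x rfl)
    have hUu := hU [1] u
    have hVu := hV [1] u
    simp only [stuffleSum, hR, Multiset.map_add, Multiset.sum_add, Multiset.map_replicate,
      Multiset.sum_replicate] at hUu hVu
    apply nsmul_right_injective (Nat.succ_ne_zero (leadingOnes u))
    apply add_right_cancel (b := (R.map V).sum)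
    rw [← hVu, ← hRUV, ← hUu, hone, ih _ hu u rfl]

theorem symmetrel_extensions_compare_general {A : Type*} [CommRing A] [Algebra ℚ A]
    (Se T₁ T₂ : List ℕ+ → A) (θ₁ θ₂ : A)
    (h₁adm : ∀ l, Adm l → T₁ l = Se l) (h₂adm : ∀ l, Adm l → T₂ l = Se l)
    (h₁sym : ∀ p q : List ℕ+, T₁ p * T₁ q = ((stuffle p q).map T₁).sum)
    (h₂sym : ∀ p q : List ℕ+, T₂ p * T₂ q = ((stuffle p q).map T₂).sum)
    (h₁one : T₁ [1] = θ₁) (h₂one : T₂ [1] = θ₂) :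
    ∀ w : List ℕ+,
      T₁ w = ∑ k ∈ Finset.range (w.length + 1),
        NeMould (θ₁ - θ₂) (w.take k) * T₂ (w.drop k) := by
  have : IsAddTorsionFree A := .of_module_rat A
  have hnil : T₁ [] = T₂ [] := by rw [h₁adm [] adm_nil, h₂adm [] adm_nil]
  have hone : T₁ [1] = mouldMul (NeMould (θ₁ - θ₂)) T₂ [1] := by
    have h₁ := IsSymmetrel.mul_nil h₁sym [1]
    have h₂ := IsSymmetrel.mul_nil h₂sym [1]
    rw [hnil] at h₁
    simp only [mouldMul_cons, mouldMul_nil, neMould_nil, neMould_singleton_one]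
    rw [← h₁one, ← h₂one]
    linear_combination -h₁ + h₂
  have hM : IsSymmetrel (mouldMul (NeMould (θ₁ - θ₂)) T₂) := (isSymmetrel_neMould _).mouldMul h₂sym
  have hT₁ := IsSymmetrel.eq_of_adm h₁sym hM
    (fun l hl ↦ by rw [h₁adm l hl, mouldMul_neMould_of_adm _ _ hl, h₂adm l hl]) hone
  exact fun w ↦ congrFun hT₁ w

/-- Comparison of two symmetrel extensions: `Se_{θ₁} = Ne_{θ₁-θ₂} × Se_{θ₂}`. -/
theorem symmetrel_extensions_compare {A : Type*} [CommRing A] [Algebra ℚ A]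
    (Se T₁ T₂ : List ℕ+ → A) (θ₁ θ₂ : A)
    (hSe : ∀ p q : List ℕ+, Se p * Se q = ((stuffle p q).map Se).sum)
    (h₁adm : ∀ l, Adm l → T₁ l = Se l) (h₂adm : ∀ l, Adm l → T₂ l = Se l)
    (h₁sym : ∀ p q : List ℕ+, T₁ p * T₁ q = ((stuffle p q).map T₁).sum)
    (h₂sym : ∀ p q : List ℕ+, T₂ p * T₂ q = ((stuffle p q).map T₂).sum)
    (h₁one : T₁ [1] = θ₁) (h₂one : T₂ [1] = θ₂)
    (h₁empty : T₁ [] = 1) (h₂empty : T₂ [] = 1) :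
    ∀ w : List ℕ+,
      T₁ w = ∑ k ∈ Finset.range (w.length + 1),
        NeMould (θ₁ - θ₂) (w.take k) * T₂ (w.drop k) :=
  symmetrel_extensions_compare_general Se T₁ T₂ θ₁ θ₂ h₁adm h₂adm h₁sym h₂sym h₁one h₂one
end
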